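/- The same first-order expansion holds for the orthogonalized update: with G, A, V, P as above, define N(η) = Vᵀ(G + ηAG)[(G + ηAG)ᵀ(G + ηAG)]⁻¹(G + ηAG)ᵀV. Then N(0) = VᵀPPᵀV and N'(0) = VᵀPPᵀAV + VᵀAPPᵀV − 2VᵀPPᵀAPPᵀV; in particular the two updates G + ηAG and G + η(I − GGᵀ)AG produce matrices M(η), N(η) agreeing to first order in η. -/

import Mathlib

/-!
Write `S = GᵀG` and `P = G S⁻¹ Gᵀ`. Differentiating `Y (YᵀY)⁻¹ Yᵀ` along `Y = G + ηW` gives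
`(1 - P) W S⁻¹ Gᵀ + G S⁻¹ Wᵀ (1 - P)` at `η = 0`. This only sees `W` modulo the column space of
`G`, because `(1 - P) G = 0`. The two updates differ by `(1 - GGᵀ) AG - AG = G (-GᵀAG)`, so they
have the same derivative. For `W = AG` with `A` symmetric it is `(1 - P) A P + P A (1 - P)`.
-/

open Matrix

section MatrixCalculus

-- The statements only involve the topology of matrices, so any matrix norm serves in the proofs.
attribute [local instance] Matrix.linftyOpNormedAddCommGroup Matrix.linftyOpNormedSpace
  Matrix.linftyOpNormedRing Matrix.linftyOpNormedAlgebra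

variable {𝕜 : Type*} [NontriviallyNormedField 𝕜]
  {l m n : Type*} [Fintype l] [Fintype m] [Fintype n] {x : 𝕜}

theorem hasDerivAt_matrix_add_smul (A B : Matrix m n 𝕜) (x : 𝕜) :
    HasDerivAt (fun t => A + t • B) B x := by
  have := ((hasDerivAt_id x).smul_const B).const_add A
  simp only [id, one_smul] at this
  exact this

variable [CompleteSpace 𝕜]

theorem HasDerivAt.matrix_mul {A : 𝕜 → Matrix l m 𝕜} {B : 𝕜 → Matrix m n 𝕜}
    {A' : Matrix l m 𝕜} {B' : Matrix m n 𝕜} (hA : HasDerivAt A A' x) (hB : HasDerivAt B B' x) :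
    HasDerivAt (fun t => A t * B t) (A' * B x + A x * B') x := by
  have := ((mulLinearMap 𝕜 : Matrix l m 𝕜 →ₗ[𝕜] _ →ₗ[𝕜] Matrix l n 𝕜).toContinuousBilinearMap
    ).hasDerivAt_of_bilinear (fun _ => hA) (fun _ => hB)
  rw [add_comm] at this
  exact this

theorem HasDerivAt.matrix_const_mul (U : Matrix l m 𝕜) {A : 𝕜 → Matrix m n 𝕜}
    {A' : Matrix m n 𝕜} (hA : HasDerivAt A A' x) : HasDerivAt (fun t => U * A t) (U * A') x := by
  simpa using (hasDerivAt_const x U).matrix_mul hA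

theorem HasDerivAt.matrix_mul_const {A : 𝕜 → Matrix l m 𝕜} {A' : Matrix l m 𝕜}
    (hA : HasDerivAt A A' x) (V : Matrix m n 𝕜) : HasDerivAt (fun t => A t * V) (A' * V) x := by
  simpa using hA.matrix_mul (hasDerivAt_const x V)

theorem HasDerivAt.matrix_transpose {A : 𝕜 → Matrix m n 𝕜} {A' : Matrix m n 𝕜}
    (hA : HasDerivAt A A' x) : HasDerivAt (fun t => (A t)ᵀ) A'ᵀ x :=
  (transposeLinearEquiv m n 𝕜 𝕜).toLinearMap.toContinuousLinearMap.hasFDerivAt.comp_hasDerivAt x hA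

theorem HasDerivAt.matrix_apply {A : 𝕜 → Matrix m n 𝕜} {A' : Matrix m n 𝕜}
    (hA : HasDerivAt A A' x) (i : m) (j : n) : HasDerivAt (fun t => A t i j) (A' i j) x :=
  (entryLinearMap 𝕜 𝕜 i j).toContinuousLinearMap.hasFDerivAt.comp_hasDerivAt x hA

theorem HasDerivAt.matrix_inv [DecidableEq n] {A : 𝕜 → Matrix n n 𝕜} {A' : Matrix n n 𝕜}
    (hA : HasDerivAt A A' x) (hx : IsUnit (A x)) :
    HasDerivAt (fun t => (A t)⁻¹) (-((A x)⁻¹ * A' * (A x)⁻¹)) x := by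
  have : HasSummableGeomSeries (Matrix n n 𝕜) :=
    @instHasSummableGeomSeriesOfCompleteSpace _ _ (FiniteDimensional.complete 𝕜 _)
  obtain ⟨u, hu⟩ := hx
  have hinv := hasFDerivAt_ringInverse (𝕜 := 𝕜) u
  rw [hu] at hinv
  have := hinv.comp_hasDerivAt x hA
  simp only [nonsing_inv_eq_ringInverse, ← hu, Ring.inverse_unit]
  exact this

end MatrixCalculus

namespace Matrix

variable {R : Type*} [CommRing R] {m n : Type*} [Fintype m] [Fintype n] [DecidableEq n]

/-- The projector onto the column space of `G`, written `PPᵀ` in the paper. -/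
noncomputable def colProj (G : Matrix m n R) : Matrix m m R := G * (Gᵀ * G)⁻¹ * Gᵀ

variable [DecidableEq m] in
noncomputable def colProjDeriv (G W : Matrix m n R) : Matrix m m R :=
  (1 - colProj G) * W * (Gᵀ * G)⁻¹ * Gᵀ + G * (Gᵀ * G)⁻¹ * Wᵀ * (1 - colProj G)

variable {G : Matrix m n R}

theorem colProj_mul_self (hG : IsUnit (Gᵀ * G)) : colProj G * G = G := by
  simp only [colProj, Matrix.mul_assoc, nonsing_inv_mul _ ((isUnit_iff_isUnit_det _).mp hG),
    Matrix.mul_one]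

theorem transpose_mul_colProj (hG : IsUnit (Gᵀ * G)) : Gᵀ * colProj G = Gᵀ := by
  rw [colProj, ← Matrix.mul_assoc, ← Matrix.mul_assoc,
    mul_nonsing_inv _ ((isUnit_iff_isUnit_det _).mp hG), Matrix.one_mul]

variable [DecidableEq m]

theorem colProjDeriv_add_mul (hG : IsUnit (Gᵀ * G)) (W : Matrix m n R) (C : Matrix n n R) :
    colProjDeriv G (W + G * C) = colProjDeriv G W := by
  have hleft : (1 - colProj G) * (G * C) = 0 := by
    rw [← Matrix.mul_assoc, Matrix.sub_mul, Matrix.one_mul, colProj_mul_self hG, sub_self,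
      Matrix.zero_mul]
  have hright : (G * C)ᵀ * (1 - colProj G) = 0 := by
    rw [transpose_mul, Matrix.mul_assoc, Matrix.mul_sub, Matrix.mul_one,
      transpose_mul_colProj hG, sub_self, Matrix.mul_zero]
  simp only [colProjDeriv, Matrix.mul_add, transpose_add, Matrix.add_mul, hleft, Matrix.zero_mul]
  rw [Matrix.mul_assoc _ (G * C)ᵀ, hright, Matrix.mul_zero, add_zero, add_zero]

theorem colProjDeriv_mul_of_isSymm (G : Matrix m n R) {A : Matrix m m R} (hA : A.IsSymm) :
    colProjDeriv G (A * G) =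
      colProj G * A + A * colProj G - (2 : R) • (colProj G * A * colProj G) := by
  have hl : (1 - colProj G) * (A * G) * (Gᵀ * G)⁻¹ * Gᵀ = (1 - colProj G) * A * colProj G := by
    simp only [colProj, Matrix.mul_assoc]
  have hr : G * (Gᵀ * G)⁻¹ * (A * G)ᵀ = colProj G * A := by
    rw [transpose_mul, hA.eq, colProj, Matrix.mul_assoc _ Gᵀ]
  rw [colProjDeriv, hl, hr, two_smul]
  noncomm_ring

end Matrix

theorem HasDerivAt.matrix_colProj {𝕜 : Type*} [NontriviallyNormedField 𝕜] [CompleteSpace 𝕜]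
    {m n : Type*} [Fintype m] [Fintype n] [DecidableEq m] [DecidableEq n]
    {Y : 𝕜 → Matrix m n 𝕜} {Y' : Matrix m n 𝕜} {x : 𝕜} (hY : HasDerivAt Y Y' x)
    (hx : IsUnit ((Y x)ᵀ * Y x)) :
    HasDerivAt (fun t => colProj (Y t)) (colProjDeriv (Y x) Y') x := by
  have hgram := hY.matrix_transpose.matrix_mul hY
  simp only [colProj]
  convert (hY.matrix_mul (hgram.matrix_inv hx)).matrix_mul hY.matrix_transpose using 1
  simp only [colProjDeriv, colProj, Matrix.sub_mul, Matrix.mul_sub, Matrix.one_mul, Matrix.mul_one,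
    Matrix.add_mul, Matrix.mul_add, Matrix.mul_neg, Matrix.neg_mul, Matrix.mul_assoc]
  abel

/-- The same first-order expansion holds for the orthogonalized update: with
`N(η) = Vᵀ Y(η) (Y(η)ᵀY(η))⁻¹ Y(η)ᵀ V` for `Y(η) = G + ηAG`, we have `N(0) = VᵀPPᵀV` and
`N'(0) = VᵀPPᵀAV + VᵀAPPᵀV − 2VᵀPPᵀAPPᵀV`; in particular `M` and `N` (for the update
`G + η(I − GGᵀ)AG`) agree to first order in `η` at `0`. -/
theorem normalized_update_first_order {n k : ℕ}
    (G : Matrix (Fin n) (Fin k) ℝ) (A : Matrix (Fin n) (Fin n) ℝ)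
    (V : Matrix (Fin n) (Fin k) ℝ)
    (hG : IsUnit (Gᵀ * G)) (hA : A.IsSymm)
    (PP : Matrix (Fin n) (Fin n) ℝ) (hPP : PP = G * (Gᵀ * G)⁻¹ * Gᵀ)
    (X Y : ℝ → Matrix (Fin n) (Fin k) ℝ)
    (hX : ∀ η, X η = G + η • ((1 - G * Gᵀ) * (A * G)))
    (hY : ∀ η, Y η = G + η • (A * G))
    (M N : ℝ → Matrix (Fin k) (Fin k) ℝ)
    (hM : ∀ η, M η = Vᵀ * X η * ((X η)ᵀ * X η)⁻¹ * (X η)ᵀ * V)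
    (hN : ∀ η, N η = Vᵀ * Y η * ((Y η)ᵀ * Y η)⁻¹ * (Y η)ᵀ * V) :
    N 0 = Vᵀ * PP * V ∧
      (∀ i j, HasDerivAt (fun η => N η i j)
        ((Vᵀ * PP * A * V + Vᵀ * A * PP * V
          - (2 : ℝ) • (Vᵀ * PP * A * PP * V)) i j) 0) ∧
      M 0 = N 0 ∧
      (∀ i j, HasDerivAt (fun η => M η i j)
        ((Vᵀ * PP * A * V + Vᵀ * A * PP * V
          - (2 : ℝ) • (Vᵀ * PP * A * PP * V)) i j) 0) := by
  have hM' (η : ℝ) : M η = Vᵀ * colProj (X η) * V := by simp only [hM, colProj, Matrix.mul_assoc]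
  have hN' (η : ℝ) : N η = Vᵀ * colProj (Y η) * V := by simp only [hN, colProj, Matrix.mul_assoc]
  have hderiv (W : Matrix (Fin n) (Fin k) ℝ) (i j : Fin k) :
      HasDerivAt (fun η : ℝ => (Vᵀ * colProj (G + η • W) * V) i j)
        ((Vᵀ * colProjDeriv G W * V) i j) 0 := by
    have hproj := (hasDerivAt_matrix_add_smul G W 0).matrix_colProj (by rwa [zero_smul, add_zero])
    rw [zero_smul, add_zero] at hproj
    exact ((hproj.matrix_const_mul Vᵀ).matrix_mul_const V).matrix_apply i j
  have hXW : (1 - G * Gᵀ) * (A * G) = A * G + G * (-(Gᵀ * (A * G))) := by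
    rw [Matrix.sub_mul, Matrix.one_mul, Matrix.mul_neg, Matrix.mul_assoc, sub_eq_add_neg]
  have hfirst : Vᵀ * colProjDeriv G (A * G) * V
      = Vᵀ * PP * A * V + Vᵀ * A * PP * V - (2 : ℝ) • (Vᵀ * PP * A * PP * V) := by
    rw [colProjDeriv_mul_of_isSymm G hA, colProj, ← hPP]
    simp only [Matrix.mul_add, Matrix.mul_sub, Matrix.add_mul, Matrix.sub_mul, Matrix.mul_smul,
      Matrix.smul_mul, Matrix.mul_assoc]
  refine ⟨?_, fun i j => ?_, ?_, fun i j => ?_⟩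
  · rw [hN', hY, zero_smul, add_zero, hPP, colProj]
  · simp only [hN', hY]
    exact hfirst ▸ hderiv (A * G) i j
  · rw [hM, hN, hX, hY, zero_smul, add_zero, zero_smul, add_zero]
  · simp only [hM', hX]
    rw [← hfirst, ← colProjDeriv_add_mul hG, ← hXW]
    exact hderiv _ i j
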